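/- Soft dynamic programming optimality and closed-form optimal policy: Define Q* and V* by the backward recursion V*_{H+1} ≡ 0, Q*_h(s,a) := R_h(s,a) + E_{s'∼P_h(s,a)}[V*_{h+1}(s')], and V*_h(s) := log Σ_{a∈A} exp(Q*_h(s,a)) for h = H, …, 1. Then for every policy π, J_β(π) ≤ β · E_{s_1∼ρ}[V*_1(s_1)], and equality holds for the softmax policy π_{Q*} given by π_{Q*,h}(a|s) := exp(Q*_h(s,a) − V*_h(s)); in particular π_{Q*} maximizes J_β over all policies. -/

import Mathlib

open Finset

namespace TBRM

/-- `p` is a probability mass function on a finite type. -/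
def IsPMF {X : Type*} [Fintype X] (p : X → ℝ) : Prop :=
  (∀ x, 0 ≤ p x) ∧ ∑ x, p x = 1

/-- χ²-divergence between pmfs on a finite type. -/
noncomputable def chiSq {X : Type*} [Fintype X] (p q : X → ℝ) : ℝ :=
  (∑ x, p x ^ 2 / q x) - 1

variable {H : ℕ} {S : Fin (H + 1) → Type*} {A : Type*}
variable [∀ i, Fintype (S i)] [∀ i, DecidableEq (S i)] [Fintype A] [DecidableEq A]

/-- Density of a full trajectory (including the extra final state `s_{H+1}`),
under initial distribution `ρ`, transition kernels `P`, and policy `π`. -/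
noncomputable def trajDensity (ρ : S 0 → ℝ)
    (P : ∀ h : Fin H, S h.castSucc → A → S h.succ → ℝ)
    (π : ∀ h : Fin H, S h.castSucc → A → ℝ)
    (s : ∀ i : Fin (H + 1), S i) (a : Fin H → A) : ℝ :=
  ρ (s 0) * ∏ h : Fin H, (π h (s h.castSucc) (a h) * P h (s h.castSucc) (a h) (s h.succ))

/-- Expectation of a trajectory functional under policy `π`. -/
noncomputable def expTraj (ρ : S 0 → ℝ)
    (P : ∀ h : Fin H, S h.castSucc → A → S h.succ → ℝ)
    (π : ∀ h : Fin H, S h.castSucc → A → ℝ)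
    (f : (∀ i : Fin (H + 1), S i) → (Fin H → A) → ℝ) : ℝ :=
  ∑ s : ∀ i : Fin (H + 1), S i, ∑ a : Fin H → A, trajDensity ρ P π s a * f s a

/-- Step-`h` occupancy measure `d_h^π(x,b)`. -/
noncomputable def occ (ρ : S 0 → ℝ)
    (P : ∀ h : Fin H, S h.castSucc → A → S h.succ → ℝ)
    (π : ∀ h : Fin H, S h.castSucc → A → ℝ)
    (h : Fin H) (x : S h.castSucc) (b : A) : ℝ :=
  expTraj ρ P π (fun s a => if s h.castSucc = x ∧ a h = b then 1 else 0)


/-- KL-regularized return `J_β(π)` relative to a reference policy `πref`. -/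
noncomputable def KLret (ρ : S 0 → ℝ)
    (P : ∀ h : Fin H, S h.castSucc → A → S h.succ → ℝ)
    (πref : ∀ h : Fin H, S h.castSucc → A → ℝ)
    (r : ∀ h : Fin H, S h.castSucc → A → ℝ) (β : ℝ)
    (π : ∀ h : Fin H, S h.castSucc → A → ℝ) : ℝ :=
  expTraj ρ P π (fun s a => ∑ h : Fin H,
    (r h (s h.castSucc) (a h)
      - β * Real.log (π h (s h.castSucc) (a h) / πref h (s h.castSucc) (a h))))

/-- The optimal soft value function `V*`, defined by the backward recursion
`V*_{H+1} ≡ 0` and `V*_h(s) = log Σ_a exp(R_h(s,a) + E_{s'∼P_h(s,a)}[V*_{h+1}(s')])`,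
where `R_h(s,a) := r_h(s,a)/β + log πref_h(a|s)`. -/
noncomputable def Vstar
    (P : ∀ h : Fin H, S h.castSucc → A → S h.succ → ℝ)
    (πref : ∀ h : Fin H, S h.castSucc → A → ℝ)
    (r : ∀ h : Fin H, S h.castSucc → A → ℝ) (β : ℝ) :
    ∀ i : Fin (H + 1), S i → ℝ :=
  Fin.reverseInduction (fun _ => 0)
    (fun h rec s => Real.log (∑ a : A, Real.exp
      (r h s a / β + Real.log (πref h s a) + ∑ s' : S h.succ, P h s a s' * rec s')))

/-- The optimal soft Q-function
`Q*_h(s,a) := R_h(s,a) + E_{s'∼P_h(s,a)}[V*_{h+1}(s')]`. -/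
noncomputable def Qstar
    (P : ∀ h : Fin H, S h.castSucc → A → S h.succ → ℝ)
    (πref : ∀ h : Fin H, S h.castSucc → A → ℝ)
    (r : ∀ h : Fin H, S h.castSucc → A → ℝ) (β : ℝ)
    (h : Fin H) (s : S h.castSucc) (a : A) : ℝ :=
  r h s a / β + Real.log (πref h s a)
    + ∑ s' : S h.succ, P h s a s' * Vstar P πref r β h.succ s'

/-!
The KL-regularized return of `π` is `E_ρ[V^π_1]`, where `V^π` evaluates `π` backwards for the
per-step reward `r - β log (π / πref)`. Inductively `V^π_{h+1} ≤ β V*_{h+1}`; substituting this,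
the step-`h` recursion is bounded by `β Σ_a π(a) (Q*_h(a) - log π(a))`, and Gibbs' variational
inequality `Σ p (q - log p) ≤ log Σ exp q`, with equality at `p = softmax q`, bounds that by
`β V*_h`. For `π_{Q*}` every step is an equality.
-/

section Development

omit [∀ i, DecidableEq (S i)] [DecidableEq A]

noncomputable def policyValue
    (P : ∀ h : Fin H, S h.castSucc → A → S h.succ → ℝ)
    (π f : ∀ h : Fin H, S h.castSucc → A → ℝ) :
    ∀ i : Fin (H + 1), S i → ℝ :=
  Fin.reverseInduction (fun _ => 0)
    (fun h rec s => ∑ a : A, π h s a * (f h s a + ∑ s' : S h.succ, P h s a s' * rec s'))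

@[simp]
lemma policyValue_last (P : ∀ h : Fin H, S h.castSucc → A → S h.succ → ℝ)
    (π f : ∀ h : Fin H, S h.castSucc → A → ℝ) (s : S (Fin.last H)) :
    policyValue P π f (Fin.last H) s = 0 := by
  simp [policyValue]

lemma policyValue_castSucc (P : ∀ h : Fin H, S h.castSucc → A → S h.succ → ℝ)
    (π f : ∀ h : Fin H, S h.castSucc → A → ℝ) (h : Fin H) (s : S h.castSucc) :
    policyValue P π f h.castSucc s =
      ∑ a : A, π h s a * (f h s a + ∑ s' : S h.succ, P h s a s' * policyValue P π f h.succ s') := by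
  simp [policyValue]

/-- `fun i => S i.succ` with the kernels `P h.succ` is the MDP with its first step removed. -/
lemma policyValue_tail {H : ℕ} {S : Fin (H + 2) → Type*} {A : Type*}
    [∀ i, Fintype (S i)] [Fintype A]
    (P : ∀ h : Fin (H + 1), S h.castSucc → A → S h.succ → ℝ)
    (π f : ∀ h : Fin (H + 1), S h.castSucc → A → ℝ) (j : Fin (H + 1)) (s : S j.succ) :
    policyValue (S := fun i : Fin (H + 1) => S i.succ) (fun h => P h.succ)
        (fun h => π h.succ) (fun h => f h.succ) j s = policyValue P π f j.succ s := by
  induction j using Fin.reverseInduction with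
  | last => simp only [policyValue_last]; exact (policyValue_last P π f s).symm
  | cast j ih =>
    rw [policyValue_castSucc]
    refine Eq.trans ?_ (policyValue_castSucc P π f j.succ s).symm
    simp only [ih]

lemma expTraj_cons {H : ℕ} {S : Fin (H + 2) → Type*} {A : Type*}
    [∀ i, Fintype (S i)] [Fintype A]
    (ρ : S 0 → ℝ)
    (P : ∀ h : Fin (H + 1), S h.castSucc → A → S h.succ → ℝ)
    (π : ∀ h : Fin (H + 1), S h.castSucc → A → ℝ)
    (F : (∀ i : Fin (H + 2), S i) → (Fin (H + 1) → A) → ℝ) :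
    expTraj ρ P π F =
      ∑ s₀ : S 0, ∑ a₀ : A, ρ s₀ * π 0 s₀ a₀ *
        expTraj (S := fun i : Fin (H + 1) => S i.succ) (P 0 s₀ a₀)
          (fun h => P h.succ) (fun h => π h.succ)
          (fun s a => F (Fin.cons s₀ s) (Fin.cons a₀ a)) := by
  simp only [expTraj, trajDensity]
  rw [← (Fin.consEquiv S).sum_comp, Fintype.sum_prod_type]
  simp only [← (Fin.consEquiv fun _ : Fin (H + 1) => A).sum_comp, Fintype.sum_prod_type]
  simp only [Fin.cons_zero, Fin.prod_univ_succ, Fin.cons_succ,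
    Fin.castSucc_zero, ← Fin.succ_castSucc, Fin.consEquiv, Equiv.coe_fn_mk, mul_sum]
  refine sum_congr rfl fun s₀ _ => ?_
  rw [sum_comm]
  refine sum_congr rfl fun a₀ _ => sum_congr rfl fun s _ => sum_congr rfl fun a _ => ?_
  ring

/-- The constant `c` carries the payoff already collected along the prefix in the induction. -/
lemma expTraj_const_add_sum_eq (ρ : S 0 → ℝ)
    (P : ∀ h : Fin H, S h.castSucc → A → S h.succ → ℝ)
    (π f : ∀ h : Fin H, S h.castSucc → A → ℝ) (c : ℝ)
    (hP : ∀ h s a, ∑ s', P h s a s' = 1) (hπ : ∀ h s, ∑ a, π h s a = 1) :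
    expTraj ρ P π (fun s a => c + ∑ h, f h (s h.castSucc) (a h)) =
      ∑ s₀, ρ s₀ * (c + policyValue P π f 0 s₀) := by
  induction H generalizing c with
  | zero =>
    have hv : ∀ s, policyValue P π f 0 s = 0 := policyValue_last P π f
    simp only [expTraj, trajDensity, univ_eq_empty, sum_empty, prod_empty, mul_one, add_zero,
      Fintype.sum_unique, hv]
    rw [← (Fin.consEquiv S).sum_comp, Fintype.sum_prod_type]
    simp [Fin.consEquiv]
  | succ H ih =>
    rw [expTraj_cons]
    refine sum_congr rfl fun s₀ _ => ?_
    have htail : ∀ a₀ : A,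
        expTraj (S := fun i : Fin (H + 1) => S i.succ) (P 0 s₀ a₀)
            (fun h => P h.succ) (fun h => π h.succ)
            (fun s a => c + ∑ h, f h ((Fin.cons s₀ s : ∀ i, S i) h.castSucc)
              (Fin.cons (α := fun _ => A) a₀ a h))
          = c + (f 0 s₀ a₀ + ∑ s', P 0 s₀ a₀ s' * policyValue P π f (Fin.succ 0) s') := by
      intro a₀
      simp only [Fin.sum_univ_succ (n := H), Fin.castSucc_zero, Fin.cons_zero, Fin.cons_succ,
        ← Fin.succ_castSucc, ← add_assoc]
      rw [ih (S := fun i => S i.succ) (P 0 s₀ a₀) (fun h => P h.succ) (fun h => π h.succ)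
        (fun h => f h.succ) (c + f 0 s₀ a₀) (fun h => hP h.succ) (fun h => hπ h.succ)]
      simp only [policyValue_tail, mul_add, sum_add_distrib, ← sum_mul, hP 0 s₀ a₀, one_mul,
        add_assoc]
    rw [show policyValue P π f 0 s₀ = _ from policyValue_castSucc P π f 0 s₀]
    simp only [mul_assoc, htail, ← mul_sum, mul_add, sum_add_distrib, ← sum_mul, hπ 0 s₀, one_mul]

lemma mul_sub_log_le_exp_sub {p : ℝ} (hp : 0 ≤ p) (q : ℝ) :
    p * (q - Real.log p) ≤ Real.exp q - p := by
  rcases hp.eq_or_lt with rfl | hp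
  · simp [Real.exp_nonneg]
  · have h := Real.add_one_le_exp (q - Real.log p)
    rw [Real.exp_sub, Real.exp_log hp, le_div_iff₀ hp] at h
    linarith

lemma sum_exp_sub_log_sum_exp {ι : Type*} [Fintype ι] [Nonempty ι] (q : ι → ℝ) :
    ∑ i, Real.exp (q i - Real.log (∑ j, Real.exp (q j))) = 1 := by
  have hpos : 0 < ∑ j, Real.exp (q j) := sum_pos (fun j _ => Real.exp_pos _) univ_nonempty
  simp only [Real.exp_sub, Real.exp_log hpos, ← sum_div, div_self hpos.ne']

/-- Gibbs' variational inequality: `log Σ exp` is the convex conjugate of negative entropy. -/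
lemma sum_mul_sub_log_le_log_sum_exp {ι : Type*} [Fintype ι] [Nonempty ι] {p : ι → ℝ}
    (hp : IsPMF p) (q : ι → ℝ) :
    ∑ i, p i * (q i - Real.log (p i)) ≤ Real.log (∑ i, Real.exp (q i)) := by
  set V := Real.log (∑ i, Real.exp (q i))
  calc ∑ i, p i * (q i - Real.log (p i))
      = ∑ i, p i * (q i - V - Real.log (p i)) + V := by
        simp only [mul_sub, sum_sub_distrib, ← sum_mul, hp.2]; ring
    _ ≤ ∑ i, (Real.exp (q i - V) - p i) + V := by
        gcongr with i; exact mul_sub_log_le_exp_sub (hp.1 i) _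
    _ = V := by rw [sum_sub_distrib, sum_exp_sub_log_sum_exp, hp.2]; ring

lemma sum_softmax_mul_sub_log {ι : Type*} [Fintype ι] [Nonempty ι] (q : ι → ℝ) :
    ∑ i, Real.exp (q i - Real.log (∑ j, Real.exp (q j))) *
        (q i - Real.log (Real.exp (q i - Real.log (∑ j, Real.exp (q j))))) =
      Real.log (∑ j, Real.exp (q j)) := by
  simp only [Real.log_exp, sub_sub_cancel, ← sum_mul, sum_exp_sub_log_sum_exp, one_mul]

@[simp]
lemma Vstar_last (P : ∀ h : Fin H, S h.castSucc → A → S h.succ → ℝ)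
    (πref r : ∀ h : Fin H, S h.castSucc → A → ℝ) (β : ℝ) (s : S (Fin.last H)) :
    Vstar P πref r β (Fin.last H) s = 0 := by
  simp [Vstar]

lemma Vstar_castSucc (P : ∀ h : Fin H, S h.castSucc → A → S h.succ → ℝ)
    (πref r : ∀ h : Fin H, S h.castSucc → A → ℝ) (β : ℝ) (h : Fin H) (s : S h.castSucc) :
    Vstar P πref r β h.castSucc s = Real.log (∑ a : A, Real.exp (Qstar P πref r β h s a)) := by
  simp [Vstar, Qstar]

/-- Its sum over the steps is the integrand of `KLret`. -/
noncomputable def regReward (πref r : ∀ h : Fin H, S h.castSucc → A → ℝ) (β : ℝ)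
    (π : ∀ h : Fin H, S h.castSucc → A → ℝ) (h : Fin H) (s : S h.castSucc) (a : A) : ℝ :=
  r h s a - β * Real.log (π h s a / πref h s a)

/-- The policy `π_{Q*}`. -/
noncomputable def softmaxPolicy (P : ∀ h : Fin H, S h.castSucc → A → S h.succ → ℝ)
    (πref r : ∀ h : Fin H, S h.castSucc → A → ℝ) (β : ℝ)
    (h : Fin H) (s : S h.castSucc) (a : A) : ℝ :=
  Real.exp (Qstar P πref r β h s a - Vstar P πref r β h.castSucc s)

lemma sum_softmaxPolicy [Nonempty A] (P : ∀ h : Fin H, S h.castSucc → A → S h.succ → ℝ)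
    (πref r : ∀ h : Fin H, S h.castSucc → A → ℝ) (β : ℝ) (h : Fin H) (s : S h.castSucc) :
    ∑ a, softmaxPolicy P πref r β h s a = 1 := by
  simp only [softmaxPolicy, Vstar_castSucc]
  exact sum_exp_sub_log_sum_exp _

lemma mul_regReward_add_eq (P : ∀ h : Fin H, S h.castSucc → A → S h.succ → ℝ)
    (πref r π : ∀ h : Fin H, S h.castSucc → A → ℝ) {β : ℝ} (hβ : β ≠ 0)
    (h : Fin H) (s : S h.castSucc) (a : A) (hπref : 0 < πref h s a) :
    π h s a * (regReward πref r β π h s a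
        + β * ∑ s', P h s a s' * Vstar P πref r β h.succ s') =
      β * (π h s a * (Qstar P πref r β h s a - Real.log (π h s a))) := by
  rcases eq_or_ne (π h s a) 0 with hπ | hπ
  · simp [hπ]
  · rw [regReward, Qstar, Real.log_div hπ hπref.ne']
    field_simp
    ring

lemma policyValue_regReward_le_Vstar [Nonempty A]
    (P : ∀ h : Fin H, S h.castSucc → A → S h.succ → ℝ) (hP : ∀ h s a s', 0 ≤ P h s a s')
    (πref : ∀ h : Fin H, S h.castSucc → A → ℝ) (hπref : ∀ h s a, 0 < πref h s a)
    (r : ∀ h : Fin H, S h.castSucc → A → ℝ) {β : ℝ} (hβ : 0 < β)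
    (π : ∀ h : Fin H, S h.castSucc → A → ℝ) (hπ : ∀ h s, IsPMF (π h s))
    (i : Fin (H + 1)) (s : S i) :
    policyValue P π (regReward πref r β π) i s ≤ β * Vstar P πref r β i s := by
  induction i using Fin.reverseInduction with
  | last => simp
  | cast h ih =>
    rw [policyValue_castSucc, Vstar_castSucc]
    calc ∑ a, π h s a * (regReward πref r β π h s a
          + ∑ s', P h s a s' * policyValue P π (regReward πref r β π) h.succ s')
        ≤ ∑ a, π h s a * (regReward πref r β π h s a
          + ∑ s', P h s a s' * (β * Vstar P πref r β h.succ s')) := by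
          gcongr with a _ s' _
          exacts [(hπ h s).1 a, hP h s a s', ih s']
      _ = β * ∑ a, π h s a * (Qstar P πref r β h s a - Real.log (π h s a)) := by
          simp only [mul_left_comm _ β, ← mul_sum,
            mul_regReward_add_eq P πref r π hβ.ne' h s _ (hπref h s _)]
      _ ≤ β * Real.log (∑ a, Real.exp (Qstar P πref r β h s a)) := by
          gcongr
          exact sum_mul_sub_log_le_log_sum_exp (hπ h s) _

lemma policyValue_softmaxPolicy_eq_Vstar [Nonempty A]
    (P : ∀ h : Fin H, S h.castSucc → A → S h.succ → ℝ)
    (πref : ∀ h : Fin H, S h.castSucc → A → ℝ) (hπref : ∀ h s a, 0 < πref h s a)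
    (r : ∀ h : Fin H, S h.castSucc → A → ℝ) {β : ℝ} (hβ : β ≠ 0)
    (i : Fin (H + 1)) (s : S i) :
    policyValue P (softmaxPolicy P πref r β)
        (regReward πref r β (softmaxPolicy P πref r β)) i s = β * Vstar P πref r β i s := by
  induction i using Fin.reverseInduction with
  | last => simp
  | cast h ih =>
    rw [policyValue_castSucc]
    simp only [ih, mul_left_comm _ β, ← mul_sum,
      mul_regReward_add_eq P πref r _ hβ h s _ (hπref h s _)]
    congr 1
    simp only [softmaxPolicy, Vstar_castSucc]
    exact sum_softmax_mul_sub_log _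

lemma KLret_eq_sum_policyValue (ρ : S 0 → ℝ)
    (P : ∀ h : Fin H, S h.castSucc → A → S h.succ → ℝ)
    (πref r : ∀ h : Fin H, S h.castSucc → A → ℝ) (β : ℝ)
    (π : ∀ h : Fin H, S h.castSucc → A → ℝ)
    (hP : ∀ h s a, ∑ s', P h s a s' = 1) (hπ : ∀ h s, ∑ a, π h s a = 1) :
    KLret ρ P πref r β π = ∑ s₀, ρ s₀ * policyValue P π (regReward πref r β π) 0 s₀ := by
  simpa only [zero_add, KLret, regReward] using expTraj_const_add_sum_eq ρ P π (regReward πref r β π) 0 hP hπ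

end Development

theorem soft_dp_optimality_general
    [Nonempty A]
    (ρ : S 0 → ℝ) (hρ : IsPMF ρ)
    (P : ∀ h : Fin H, S h.castSucc → A → S h.succ → ℝ)
    (hP : ∀ h s a, IsPMF (P h s a))
    (r : ∀ h : Fin H, S h.castSucc → A → ℝ)
    (πref : ∀ h : Fin H, S h.castSucc → A → ℝ)
    (hπrefpos : ∀ h s a, 0 < πref h s a)
    (β : ℝ) (hβ : 0 < β) :
    (∀ π : ∀ h : Fin H, S h.castSucc → A → ℝ, (∀ h s, IsPMF (π h s)) →
      KLret ρ P πref r β π ≤ β * ∑ s1 : S 0, ρ s1 * Vstar P πref r β 0 s1) ∧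
    KLret ρ P πref r β
        (fun h s a => Real.exp (Qstar P πref r β h s a - Vstar P πref r β h.castSucc s)) =
      β * ∑ s1 : S 0, ρ s1 * Vstar P πref r β 0 s1 := by
  have hPsum : ∀ h s a, ∑ s', P h s a s' = 1 := fun h s a => (hP h s a).2
  refine ⟨fun π hπ => ?_, ?_⟩
  · rw [KLret_eq_sum_policyValue ρ P πref r β π hPsum fun h s => (hπ h s).2, mul_sum]
    refine sum_le_sum fun s₀ _ => ?_
    rw [mul_left_comm]
    exact mul_le_mul_of_nonneg_left (policyValue_regReward_le_Vstar P (fun h s a => (hP h s a).1)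
      πref hπrefpos r hβ π hπ 0 s₀) (hρ.1 s₀)
  · show KLret ρ P πref r β (softmaxPolicy P πref r β) = _
    rw [KLret_eq_sum_policyValue ρ P πref r β (softmaxPolicy P πref r β) hPsum
      (sum_softmaxPolicy P πref r β), mul_sum]
    simp only [policyValue_softmaxPolicy_eq_Vstar P πref hπrefpos r hβ.ne', mul_left_comm]

/-- **Soft dynamic programming optimality and closed-form optimal policy.** For every
policy `π`, `J_β(π) ≤ β · E_{s_1∼ρ}[V*_1(s_1)]`, and equality holds for the softmax policy
`π_{Q*,h}(a|s) := exp(Q*_h(s,a) − V*_h(s))`; in particular `π_{Q*}` maximizes `J_β`. -/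
theorem soft_dp_optimality
    (hH : 0 < H) [∀ i, Nonempty (S i)] [Nonempty A]
    (ρ : S 0 → ℝ) (hρ : IsPMF ρ)
    (P : ∀ h : Fin H, S h.castSucc → A → S h.succ → ℝ)
    (hP : ∀ h s a, IsPMF (P h s a))
    (r : ∀ h : Fin H, S h.castSucc → A → ℝ)
    (πref : ∀ h : Fin H, S h.castSucc → A → ℝ)
    (hπref : ∀ h s, IsPMF (πref h s)) (hπrefpos : ∀ h s a, 0 < πref h s a)
    (β : ℝ) (hβ : 0 < β) :
    (∀ π : ∀ h : Fin H, S h.castSucc → A → ℝ, (∀ h s, IsPMF (π h s)) →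
      KLret ρ P πref r β π ≤ β * ∑ s1 : S 0, ρ s1 * Vstar P πref r β 0 s1) ∧
    KLret ρ P πref r β
        (fun h s a => Real.exp (Qstar P πref r β h s a - Vstar P πref r β h.castSucc s)) =
      β * ∑ s1 : S 0, ρ s1 * Vstar P πref r β 0 s1 :=
  soft_dp_optimality_general ρ hρ P hP r πref hπrefpos β hβ

end TBRM
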